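/- arXiv:2005.04194 — 6 statements merged into one kernel-verified Lean document; each statement's English description precedes it below -/
import Mathlib

section
/- (Lerch's formula) For every real number x with 0 < x ≤ 1, the derivative in s of the Hurwitz zeta function at s = 0 is given by (d/ds) H(x,s)|_{s=0} = log(Γ(x)/√(2π)), i.e. it equals log Γ(x) - (1/2)·log(2π), where Γ is Euler's Gamma function. -/
/-
On each interval `[n + x, n + x + 1]` compare `t ^ (-s)` with its integral by the trapezoidal rule:
the error `Eₙ(s)` is `O(|s (s + 1)| (n + x) ^ (-Re s - 2))`, so
`H(x, s) = ∑ₙ Eₙ(s) + x ^ (-s) / 2 - x ^ (1 - s) / (1 - s)`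
continues `H(x, ·)` holomorphically to `Re s > -1`, away from `s = 1`. Differentiating termwise
at `s = 0`, the partial sums telescope to `-∑_{n<N} log (n + x)` plus boundary terms, and
Stirling's formula for `log Γ(N + x) = log Γ(x) + ∑_{n<N} log (n + x)` evaluates the limit.
-/

open Set Filter Topology HurwitzZeta

theorem norm_trapezoid_sub_le {E : Type*} [NormedAddCommGroup E] [NormedSpace ℝ E]
    {f F f' f'' : ℝ → E} {a M : ℝ}
    (hF : ∀ t ∈ Icc a (a + 1), HasDerivAt F (f t) t)
    (hf : ∀ t ∈ Icc a (a + 1), HasDerivAt f (f' t) t)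
    (hf' : ∀ t ∈ Icc a (a + 1), HasDerivAt f' (f'' t) t)
    (hM : ∀ t ∈ Icc a (a + 1), ‖f'' t‖ ≤ M) :
    ‖(2⁻¹ : ℝ) • (f a + f (a + 1)) - (F (a + 1) - F a)‖ ≤ M / 2 := by
  set φ : ℝ → E := fun t => ((t - a) / 2) • (f a + f t) - (F t - F a)
  set ψ : ℝ → E := fun t => (2⁻¹ : ℝ) • (f a - f t) + ((t - a) / 2) • f' t
  have hlin : ∀ t, HasDerivAt (fun t : ℝ => (t - a) / 2) 2⁻¹ t := fun t => by
    simpa using ((hasDerivAt_id t).sub_const a).div_const 2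
  have hφ : ∀ t ∈ Icc a (a + 1), HasDerivWithinAt φ (ψ t) (Icc a (a + 1)) t := by
    intro t ht
    refine (((hlin t).smul ((hf t ht).const_add (f a))).sub
      ((hF t ht).sub_const (F a))).hasDerivWithinAt.congr_deriv ?_
    simp only [ψ, smul_sub, smul_add]
    module
  have hψ : ∀ t ∈ Icc a (a + 1),
      HasDerivWithinAt ψ (((t - a) / 2) • f'' t) (Icc a (a + 1)) t := by
    intro t ht
    refine ((((hf t ht).const_sub (f a)).const_smul (2⁻¹ : ℝ)).add
      ((hlin t).smul (hf' t ht))).hasDerivWithinAt.congr_deriv ?_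
    module
  have hψ_le : ∀ t ∈ Ico a (a + 1), ‖ψ t‖ ≤ M / 2 := by
    have hχ : ∀ u ∈ Ico a (a + 1), ‖((u - a) / 2) • f'' u‖ ≤ M / 2 := by
      intro u hu
      rw [norm_smul, Real.norm_of_nonneg (by linarith [hu.1])]
      have := hM u (Ico_subset_Icc_self hu)
      nlinarith [norm_nonneg (f'' u), hu.1, hu.2]
    intro t ht
    have := norm_image_sub_le_of_norm_deriv_le_segment' hψ hχ t (Ico_subset_Icc_self ht)
    simp only [ψ, sub_self, smul_zero, zero_div, zero_smul, add_zero, sub_zero] at this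
    have hM0 : 0 ≤ M := (norm_nonneg _).trans (hM a (left_mem_Icc.2 (by linarith)))
    calc ‖ψ t‖ ≤ M / 2 * (t - a) := this
      _ ≤ M / 2 := by nlinarith [ht.1, ht.2]
  have := norm_image_sub_le_of_norm_deriv_le_segment' hφ hψ_le (a + 1) (by simp)
  simpa [φ] using this

theorem hasDerivAt_ofReal_cpow_of_pos {t : ℝ} (ht : 0 < t) (r : ℂ) :
    HasDerivAt (fun y : ℝ => (y : ℂ) ^ r) (r * t ^ (r - 1)) t := by
  simpa using (Complex.hasStrictDerivAt_cpow_const (c := r)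
    (Complex.ofReal_mem_slitPlane.2 ht)).hasDerivAt.comp_ofReal

theorem Real.rpow_le_rpow_add_rpow {b e₁ e e₂ : ℝ} (hb : 0 < b) (h₁ : e₁ ≤ e)
    (h₂ : e ≤ e₂) : b ^ e ≤ b ^ e₁ + b ^ e₂ := by
  rcases le_total b 1 with hb1 | hb1
  · linarith [Real.rpow_le_rpow_of_exponent_ge hb hb1 h₁, Real.rpow_nonneg hb.le e₂]
  · linarith [Real.rpow_le_rpow_of_exponent_le hb1 h₂, Real.rpow_nonneg hb.le e₁]

theorem summable_nat_add_rpow_neg {x q : ℝ} (hx : 0 < x) (hq : 1 < q) :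
    Summable fun n : ℕ => ((n : ℝ) + x) ^ (-q) := by
  refine ((Real.summable_one_div_nat_add_rpow x q).2 hq).congr fun n => ?_
  rw [abs_of_pos (by positivity), Real.rpow_neg (by positivity), one_div]

theorem tendsto_ofReal_cpow_atTop {c : ℂ} (hc : c.re < 0) :
    Tendsto (fun t : ℝ => (t : ℂ) ^ c) atTop (𝓝 0) := by
  refine squeeze_zero_norm' ?_ (by simpa using tendsto_rpow_neg_atTop (neg_pos.2 hc))
  filter_upwards [eventually_gt_atTop 0] with t ht
  rw [Complex.norm_cpow_eq_rpow_re_of_pos ht]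

noncomputable def trapezoidError (b : ℝ) (s : ℂ) : ℂ :=
  ((b : ℂ) ^ (-s) + ((b + 1 : ℝ) : ℂ) ^ (-s)) / 2
    - (((b + 1 : ℝ) : ℂ) ^ (1 - s) - (b : ℂ) ^ (1 - s)) / (1 - s)

noncomputable def boundaryTerm (b : ℝ) (s : ℂ) : ℂ :=
  (b : ℂ) ^ (1 - s) / (1 - s) - (b : ℂ) ^ (-s) / 2

theorem trapezoidError_eq (b : ℝ) (s : ℂ) :
    trapezoidError b s = (b : ℂ) ^ (-s) + (boundaryTerm b s - boundaryTerm (b + 1) s) := by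
  rw [trapezoidError, boundaryTerm, boundaryTerm]
  ring

noncomputable def trapezoidErrorSum (x : ℝ) (s : ℂ) : ℂ :=
  ∑' n : ℕ, trapezoidError (n + x) s

theorem norm_trapezoidError_le {b : ℝ} (hb : 0 < b) {s : ℂ} (hs : s ≠ 1) (hre : -2 ≤ s.re) :
    ‖trapezoidError b s‖ ≤ ‖s * (s + 1)‖ * b ^ (-s.re - 2) / 2 := by
  have h1s : 1 - s ≠ 0 := sub_ne_zero.2 hs.symm
  have hpos : ∀ t ∈ Icc b (b + 1), 0 < t := fun t ht => hb.trans_le ht.1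
  have key := norm_trapezoid_sub_le (a := b) (f := fun t : ℝ => (t : ℂ) ^ (-s))
    (F := fun t : ℝ => (t : ℂ) ^ (1 - s) / (1 - s))
    (f'' := fun t : ℝ => -s * ((-s - 1) * (t : ℂ) ^ (-s - 1 - 1)))
    (fun t ht => ((hasDerivAt_ofReal_cpow_of_pos (hpos t ht) (1 - s)).div_const _).congr_deriv
      (by rw [mul_div_cancel_left₀ _ h1s, sub_sub_cancel_left]))
    (fun t ht => hasDerivAt_ofReal_cpow_of_pos (hpos t ht) (-s))
    (fun t ht => (hasDerivAt_ofReal_cpow_of_pos (hpos t ht) (-s - 1)).const_mul (-s))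
    (M := ‖s * (s + 1)‖ * b ^ (-s.re - 2)) fun t ht => by
      have hre' : (-s - 1 - 1).re = -s.re - 2 := by simp; ring
      rw [← mul_assoc, norm_mul, Complex.norm_cpow_eq_rpow_re_of_pos (hpos t ht), hre',
        show -s * (-s - 1) = s * (s + 1) by ring]
      exact mul_le_mul_of_nonneg_left (Real.rpow_le_rpow_of_nonpos hb ht.1 (by linarith))
        (norm_nonneg _)
  refine le_of_eq_of_le (congrArg norm ?_) key
  rw [trapezoidError, Complex.real_smul]
  push_cast
  ring

theorem norm_trapezoidError_le_of_re_ge_of_norm_le {b σ R : ℝ} (hb : 0 < b) (hσ : -2 ≤ σ)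
    {s : ℂ} (hs : s ≠ 1) (hsσ : σ ≤ s.re) (hsR : ‖s‖ ≤ R) :
    ‖trapezoidError b s‖ ≤ R * (R + 1) * (b ^ (-R - 2) + b ^ (-σ - 2)) / 2 := by
  have hnorm : ‖s * (s + 1)‖ ≤ R * (R + 1) := by
    rw [norm_mul]
    exact mul_le_mul hsR ((norm_add_le _ _).trans (by simpa using hsR)) (norm_nonneg _)
      ((norm_nonneg s).trans hsR)
  have hpow := Real.rpow_le_rpow_add_rpow hb (e₁ := -R - 2) (e := -s.re - 2) (e₂ := -σ - 2)
    (by linarith [Complex.re_le_norm s]) (by linarith)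
  calc ‖trapezoidError b s‖ ≤ ‖s * (s + 1)‖ * b ^ (-s.re - 2) / 2 :=
        norm_trapezoidError_le hb hs (by linarith)
    _ ≤ R * (R + 1) * (b ^ (-R - 2) + b ^ (-σ - 2)) / 2 := by
        gcongr
        exact (norm_nonneg _).trans hnorm

theorem exists_summable_bound_trapezoidError {x σ R : ℝ} (hx : 0 < x) (hσ : -1 < σ)
    (hR : σ ≤ R) : ∃ u : ℕ → ℝ, Summable u ∧
      ∀ (n : ℕ) (s : ℂ), s ≠ 1 → σ ≤ s.re → ‖s‖ ≤ R →
        ‖trapezoidError (n + x) s‖ ≤ u n :=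
  ⟨fun n => R * (R + 1) * (((n : ℝ) + x) ^ (-R - 2) + ((n : ℝ) + x) ^ (-σ - 2)) / 2,
    (((summable_nat_add_rpow_neg hx (q := R + 2) (by linarith)).add
      (summable_nat_add_rpow_neg hx (q := σ + 2) (by linarith))).mul_left (R * (R + 1) / 2)).congr
      fun n => by ring_nf,
    fun _ _ hs hsσ hsR => norm_trapezoidError_le_of_re_ge_of_norm_le (by positivity) (by linarith)
      hs hsσ hsR⟩

theorem differentiableAt_boundaryTerm {b : ℝ} (hb : 0 < b) {s : ℂ} (hs : s ≠ 1) :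
    DifferentiableAt ℂ (boundaryTerm b) s := by
  have hb' : (b : ℂ) ≠ 0 := by exact_mod_cast hb.ne'
  have h1s : 1 - s ≠ 0 := sub_ne_zero.2 hs.symm
  unfold boundaryTerm
  fun_prop (disch := first | assumption | exact Or.inl hb')

theorem differentiableAt_trapezoidError {b : ℝ} (hb : 0 < b) {s : ℂ} (hs : s ≠ 1) :
    DifferentiableAt ℂ (trapezoidError b) s := by
  have hb' : (b : ℂ) ≠ 0 := by exact_mod_cast hb.ne'
  rw [show trapezoidError b = _ from funext (trapezoidError_eq b)]
  exact (differentiableAt_id.neg.const_cpow (Or.inl hb')).add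
    ((differentiableAt_boundaryTerm hb hs).sub (differentiableAt_boundaryTerm (by linarith) hs))

theorem differentiableAt_trapezoidErrorSum {x : ℝ} (hx : 0 < x) {z : ℂ} (hz : -1 < z.re)
    (hz1 : z ≠ 1) : DifferentiableAt ℂ (trapezoidErrorSum x) z := by
  obtain ⟨u, hu, hbound⟩ := exists_summable_bound_trapezoidError hx (σ := (z.re - 1) / 2)
    (R := ‖z‖ + 1) (by linarith) (by linarith [Complex.re_le_norm z])
  set W := {s : ℂ | (z.re - 1) / 2 < s.re ∧ ‖s‖ < ‖z‖ + 1 ∧ s ≠ 1}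
  have hW : IsOpen W := (isOpen_lt continuous_const Complex.continuous_re).inter
    ((isOpen_lt continuous_norm continuous_const).inter isOpen_ne)
  refine (Complex.differentiableOn_tsum_of_summable_norm hu (fun n s hs =>
    (differentiableAt_trapezoidError (by positivity) hs.2.2).differentiableWithinAt) hW
    fun n s hs => hbound n s hs.2.2 hs.1.le hs.2.1.le).differentiableAt
    (hW.mem_nhds ⟨by linarith, by linarith, hz1⟩)

theorem hasSum_deriv_trapezoidError_zero {x : ℝ} (hx : 0 < x) :
    HasSum (fun n : ℕ => deriv (trapezoidError (n + x)) 0) (deriv (trapezoidErrorSum x) 0) := by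
  set W := {s : ℂ | -1 / 2 < s.re ∧ ‖s‖ < 1}
  have hW : IsOpen W := (isOpen_lt continuous_const Complex.continuous_re).inter
    (isOpen_lt continuous_norm continuous_const)
  have hW1 : ∀ s ∈ W, s ≠ 1 := fun s hs h => by simp [h, W] at hs
  obtain ⟨u, hu, hbound⟩ := exists_summable_bound_trapezoidError hx (σ := -1 / 2) (R := 1)
    (by norm_num) (by norm_num)
  exact Complex.hasSum_deriv_of_summable_norm hu (fun n s hs =>
    (differentiableAt_trapezoidError (by positivity) (hW1 s hs)).differentiableWithinAt) hW
    (fun n s hs => hbound n s (hW1 s hs) hs.1.le hs.2.le) (by norm_num [W])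

theorem tendsto_boundaryTerm_atTop {s : ℂ} (hs : 1 < s.re) :
    Tendsto (fun b : ℝ => boundaryTerm b s) atTop (𝓝 0) := by
  have h₁ := (tendsto_ofReal_cpow_atTop (c := 1 - s) (by simpa using hs)).div_const (1 - s)
  have h₂ := (tendsto_ofReal_cpow_atTop (c := -s) (by simp; linarith)).div_const 2
  simpa [boundaryTerm] using h₁.sub h₂

theorem hurwitzZeta_eq_trapezoidErrorSum_sub_boundaryTerm {x : ℝ} (hx0 : 0 < x) (hx1 : x ≤ 1)
    {s : ℂ} (hs : 1 < s.re) :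
    hurwitzZeta x s = trapezoidErrorSum x s - boundaryTerm x s := by
  have hζ : HasSum (fun n : ℕ => (((n : ℝ) + x : ℝ) : ℂ) ^ (-s)) (hurwitzZeta x s) := by
    refine (hasSum_hurwitzZeta_of_one_lt_re ⟨hx0.le, hx1⟩ hs).congr_fun fun n => ?_
    push_cast
    rw [Complex.cpow_neg, one_div]
  have hpartial : ∀ N : ℕ, ∑ n ∈ Finset.range N, trapezoidError (n + x) s
      = ∑ n ∈ Finset.range N, (((n : ℝ) + x : ℝ) : ℂ) ^ (-s)
        + (boundaryTerm x s - boundaryTerm (N + x) s) := by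
    intro N
    have := Finset.sum_range_sub' (fun n : ℕ => boundaryTerm (n + x) s) N
    simp only [Nat.cast_add, Nat.cast_one, Nat.cast_zero, zero_add] at this
    rw [← this, ← Finset.sum_add_distrib]
    refine Finset.sum_congr rfl fun n _ => ?_
    rw [trapezoidError_eq, add_right_comm]
  obtain ⟨u, hu, hbound⟩ := exists_summable_bound_trapezoidError hx0 (σ := 0) (R := ‖s‖)
    (by norm_num) (norm_nonneg s)
  have hsum : Summable fun n : ℕ => trapezoidError (n + x) s :=
    hu.of_norm_bounded fun n => hbound n s (by rintro rfl; simp at hs) (by linarith) le_rfl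
  have hlim := hζ.tendsto_sum_nat.add ((tendsto_const_nhds (x := boundaryTerm x s)).sub
    ((tendsto_boundaryTerm_atTop hs).comp
      (tendsto_atTop_add_const_right _ x tendsto_natCast_atTop_atTop)))
  simp only [Function.comp_apply, ← hpartial, sub_zero] at hlim
  rw [trapezoidErrorSum, (hsum.hasSum_iff_tendsto_nat.2 hlim).tsum_eq]
  ring

-- A convex region of `Re s > -1` avoiding the pole `s = 1`, containing `0` and meeting `Re s > 1`.
def lerchDomain : Set ℂ := {s : ℂ | -1 < s.re ∧ s.re - s.im < 1}

theorem isOpen_lerchDomain : IsOpen lerchDomain :=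
  (isOpen_lt continuous_const Complex.continuous_re).inter
    (isOpen_lt (Complex.continuous_re.sub Complex.continuous_im) continuous_const)

theorem convex_lerchDomain : Convex ℝ lerchDomain :=
  (convex_halfSpace_re_gt (-1)).inter
    (convex_halfSpace_lt (Complex.reLm - Complex.imLm).isLinear 1)

theorem hurwitzZeta_eqOn_lerchDomain {x : ℝ} (hx0 : 0 < x) (hx1 : x ≤ 1) :
    EqOn (fun s => hurwitzZeta x s) (fun s => trapezoidErrorSum x s - boundaryTerm x s)
      lerchDomain := by
  have hne : ∀ s ∈ lerchDomain, s ≠ 1 := fun s hs h => by simp [h, lerchDomain] at hs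
  refine AnalyticOnNhd.eqOn_of_preconnected_of_eventuallyEq (𝕜 := ℂ)
    (z₀ := 2 + 2 * Complex.I) ?_ ?_ convex_lerchDomain.isPreconnected
    (by norm_num [lerchDomain]) ?_
  · refine DifferentiableOn.analyticOnNhd (fun s hs => ?_) isOpen_lerchDomain
    exact (differentiableAt_hurwitzZeta x (hne s hs)).differentiableWithinAt
  · refine DifferentiableOn.analyticOnNhd (fun s hs => ?_) isOpen_lerchDomain
    exact ((differentiableAt_trapezoidErrorSum hx0 hs.1 (hne s hs)).fun_sub
      (differentiableAt_boundaryTerm hx0 (hne s hs))).differentiableWithinAt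
  · filter_upwards [(isOpen_lt continuous_const Complex.continuous_re).mem_nhds
      (by norm_num : (1 : ℝ) < (2 + 2 * Complex.I).re)] with s hs
    exact hurwitzZeta_eq_trapezoidErrorSum_sub_boundaryTerm hx0 hx1 hs

theorem hasDerivAt_ofReal_cpow_neg_zero {b : ℝ} (hb : 0 < b) :
    HasDerivAt (fun s : ℂ => (b : ℂ) ^ (-s)) (-(Real.log b : ℂ)) 0 := by
  have hb' : (b : ℂ) ≠ 0 := by exact_mod_cast hb.ne'
  convert (hasDerivAt_neg (0 : ℂ)).const_cpow (c := (b : ℂ)) (Or.inl hb') using 1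
  simp [Complex.ofReal_log hb.le]

theorem hasDerivAt_boundaryTerm_zero {b : ℝ} (hb : 0 < b) :
    HasDerivAt (boundaryTerm b) ((b - (b - 1 / 2) * Real.log b : ℝ) : ℂ) 0 := by
  have hb' : (b : ℂ) ≠ 0 := by exact_mod_cast hb.ne'
  have h₂ : HasDerivAt (fun s : ℂ => 1 - s) (-1) 0 := (hasDerivAt_id' 0).const_sub 1
  have h₁ := h₂.const_cpow (c := (b : ℂ)) (Or.inl hb')
  refine ((h₁.fun_div h₂ (by norm_num)).fun_sub
    ((hasDerivAt_ofReal_cpow_neg_zero hb).div_const 2)).congr_deriv ?_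
  simp [Complex.ofReal_log hb.le]
  ring

theorem hasDerivAt_trapezoidError_zero {b : ℝ} (hb : 0 < b) :
    HasDerivAt (trapezoidError b) ((-Real.log b + ((b - (b - 1 / 2) * Real.log b)
      - ((b + 1) - (b + 1 - 1 / 2) * Real.log (b + 1))) : ℝ) : ℂ) 0 := by
  rw [show trapezoidError b = _ from funext (trapezoidError_eq b)]
  refine ((hasDerivAt_ofReal_cpow_neg_zero hb).fun_add
    ((hasDerivAt_boundaryTerm_zero hb).fun_sub
      (hasDerivAt_boundaryTerm_zero (b := b + 1) (by linarith)))).congr_deriv ?_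
  push_cast
  ring

open Finset Real in
theorem tendsto_sum_log_add_sub_stirling {x : ℝ} (hx : 0 < x) :
    Tendsto (fun N : ℕ =>
      ∑ n ∈ range N, log (n + x) - ((N + x - 1 / 2) * log (N + x) - (N + x)))
      atTop (𝓝 (log (2 * π) / 2 - log (Gamma x))) := by
  have hGamma := BohrMollerup.tendsto_log_gamma hx
  have hStirling :
      Tendsto (fun N : ℕ => log (Stirling.stirlingSeq N)) atTop (𝓝 (log π / 2)) := by
    simpa [log_sqrt pi_pos.le] using
      Stirling.tendsto_stirlingSeq_sqrt_pi.log (sqrt_pos.2 pi_pos).ne'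
  have hlog : Tendsto (fun N : ℕ => (N + x + 1 / 2) * log (1 + x / N)) atTop (𝓝 x) := by
    have h₁ := (tendsto_mul_log_one_add_div_atTop x).comp tendsto_natCast_atTop_atTop
    have h₂ : Tendsto (fun N : ℕ => log (1 + x / N)) atTop (𝓝 0) := by
      simpa using ((tendsto_const_div_atTop_nhds_zero_nat x).const_add 1).log (by norm_num)
    convert h₁.add (h₂.const_mul (x + 1 / 2)) using 2
    · simp only [Function.comp_apply]; ring
    · simp
  have hlim := ((((hGamma.neg.add hStirling).add_const (log 2 / 2 + x)).sub hlog))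
  rw [show -log (Gamma x) + log π / 2 + (log 2 / 2 + x) - x = log (2 * π) / 2 - log (Gamma x) by
    rw [log_mul two_ne_zero pi_ne_zero]; ring] at hlim
  refine hlim.congr' ?_
  filter_upwards [eventually_ge_atTop 1] with N hN
  have hN0 : (0 : ℝ) < N := by exact_mod_cast hN
  have hNx : (0 : ℝ) < N + x := by linarith
  simp only [BohrMollerup.logGammaSeq, Stirling.log_stirlingSeq_formula,
    sum_range_succ, log_mul two_ne_zero hN0.ne', log_div hN0.ne' (exp_ne_zero 1), log_exp,
    show 1 + x / N = (N + x) / N by field_simp, log_div hNx.ne' hN0.ne']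
  simp only [add_comm x]
  ring

theorem deriv_trapezoidErrorSum_zero {x : ℝ} (hx : 0 < x) :
    deriv (trapezoidErrorSum x) 0 = ((Real.log (Real.Gamma x) - Real.log (2 * Real.pi) / 2
      + (x - (x - 1 / 2) * Real.log x) : ℝ) : ℂ) := by
  set e : ℝ → ℝ := fun b => b - (b - 1 / 2) * Real.log b
  have hsum := hasSum_deriv_trapezoidError_zero hx
  simp only [fun n : ℕ => (hasDerivAt_trapezoidError_zero (b := n + x) (by positivity)).deriv]
    at hsum
  have hpartial : ∀ N : ℕ,
      ∑ n ∈ Finset.range N, (-Real.log (n + x) + (e (n + x) - e (n + x + 1))) =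
        -(∑ n ∈ Finset.range N, Real.log (n + x)
          - ((N + x - 1 / 2) * Real.log (N + x) - (N + x))) + e x := by
    intro N
    have := Finset.sum_range_sub' (fun n : ℕ => e (n + x)) N
    push_cast [add_right_comm _ (1 : ℝ) x] at this
    rw [Finset.sum_add_distrib, this, Finset.sum_neg_distrib]
    simp only [e, zero_add]
    ring
  have hlim := ((tendsto_sum_log_add_sub_stirling hx).neg.add_const (e x)).ofReal
  simp only [← hpartial] at hlim
  refine tendsto_nhds_unique hsum.tendsto_sum_nat ?_
  convert hlim using 2 <;> simp only [e]
  · push_cast; rfl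
  · ring_nf

theorem deriv_hurwitzZeta_zero {x : ℝ} (hx0 : 0 < x) (hx1 : x ≤ 1) :
    deriv (fun s : ℂ => hurwitzZeta x s) 0
      = ((Real.log (Real.Gamma x) - Real.log (2 * Real.pi) / 2 : ℝ) : ℂ) := by
  have hnhds : lerchDomain ∈ 𝓝 (0 : ℂ) :=
    isOpen_lerchDomain.mem_nhds (by norm_num [lerchDomain])
  rw [((hurwitzZeta_eqOn_lerchDomain hx0 hx1).eventuallyEq_of_mem hnhds).deriv_eq,
    ((differentiableAt_trapezoidErrorSum hx0 (by norm_num) zero_ne_one).hasDerivAt.fun_sub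
      (hasDerivAt_boundaryTerm_zero hx0)).deriv, deriv_trapezoidErrorSum_zero hx0]
  push_cast
  ring

/-- Lerch's formula: for `0 < x ≤ 1`, the derivative in `s` of the Hurwitz zeta function
`H(x, s)` at `s = 0` equals `log (Γ(x) / √(2π)) = log Γ(x) - (1/2) log (2π)`. -/
theorem lerch_formula (x : ℝ) (hx0 : 0 < x) (hx1 : x ≤ 1) :
    deriv (fun s : ℂ => hurwitzZeta (x : UnitAddCircle) s) 0
        = (Real.log (Real.Gamma x / Real.sqrt (2 * Real.pi)) : ℂ) ∧
      deriv (fun s : ℂ => hurwitzZeta (x : UnitAddCircle) s) 0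
        = (Real.log (Real.Gamma x) - (1 / 2) * Real.log (2 * Real.pi) : ℝ) := by
  have h2π : 0 < 2 * Real.pi := by positivity
  rw [deriv_hurwitzZeta_zero hx0 hx1, Real.log_div (Real.Gamma_pos_of_pos hx0).ne'
    (Real.sqrt_pos.2 h2π).ne', Real.log_sqrt h2π.le]
  exact ⟨rfl, by congr 1; ring⟩
end

section
/- The derivative of the Riemann zeta function at s = 0 equals -(1/2)·log(2π); equivalently, since ζ(0) = -1/2, the logarithmic derivative ζ'(0)/ζ(0) equals log(2π). -/
namespace ZetaPaper

/-- The derivative of the Riemann zeta function at `s = 0` equals `-(1/2)·log (2π)`;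
equivalently (since `ζ(0) = -1/2`), the logarithmic derivative `ζ'(0)/ζ(0)` equals `log (2π)`. -/
theorem deriv_riemannZeta_zero :
    deriv riemannZeta 0 = -(1 / 2 : ℂ) * (Real.log (2 * Real.pi) : ℂ) ∧
      deriv riemannZeta 0 / riemannZeta 0 = (Real.log (2 * Real.pi) : ℂ) := by
  have hlog : Complex.log (2 * Real.pi) = (Real.log (2 * Real.pi) : ℂ) := by
    rw [Complex.ofReal_log (by positivity), Complex.ofReal_mul, Complex.ofReal_ofNat]
  have hderiv : deriv riemannZeta 0 = -(1 / 2 : ℂ) * (Real.log (2 * Real.pi) : ℂ) := by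
    rw [_root_.deriv_riemannZeta_zero, hlog]
    ring
  refine ⟨hderiv, ?_⟩
  rw [hderiv, riemannZeta_zero]
  field_simp
end ZetaPaper
end

section
/- Let p be a prime and let r, s, t be integers with 0 < r, s, t < p and r + s + t = p. For every integer a not divisible by p, the sum ⟨ar/p⟩ + ⟨as/p⟩ + ⟨at/p⟩ equals either 1 or 2; moreover, this sum equals 1 for a if and only if it equals 2 for p - a. In particular, the set Φ = {a ∈ (ℤ/pℤ)^*: ⟨ar/p⟩ + ⟨as/p⟩ + ⟨at/p⟩ = 1} has exactly (p-1)/2 elements. -/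
/-!
Since `r + s + t = p`, the numbers `ar/p`, `as/p`, `at/p` add up to the integer `a`, and none of
them is an integer because `p ∤ ar, as, at`. Hence the sum `S(a)` of their fractional parts is an
integer strictly between `0` and `3`. Replacing `a` by `p - a` turns each fractional part `⟨x⟩`
into `1 - ⟨x⟩`, so `S(p - a) = 3 - S(a)`: the involution `a ↦ p - a` of `{1, …, p - 1}` swaps
the `a` with `S(a) = 1` and those with `S(a) = 2`, and each class has `(p - 1) / 2` elements.
-/

open Finset Int

section FloorRing

variable {R : Type*} [Ring R] [LinearOrder R] [IsStrictOrderedRing R] [FloorRing R]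

theorem Int.fract_intCast_sub (n : ℤ) {x : R} (hx : fract x ≠ 0) :
    fract (n - x) = 1 - fract x := by
  rw [sub_eq_add_neg, fract_intCast_add, fract_neg hx]

theorem Int.fract_add_fract_add_fract_eq_one_or_two {x y z : R} {n : ℤ} (hxyz : x + y + z = n)
    (hx : fract x ≠ 0) (hy : fract y ≠ 0) (hz : fract z ≠ 0) :
    fract x + fract y + fract z = 1 ∨ fract x + fract y + fract z = 2 := by
  set k : ℤ := n - ⌊x⌋ - ⌊y⌋ - ⌊z⌋
  have hk : fract x + fract y + fract z = k := by
    simp only [k, Int.cast_sub, ← hxyz, ← self_sub_floor]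
    abel
  have hpos : (0 : R) < k := hk ▸ add_pos (add_pos ((fract_nonneg x).lt_of_ne' hx)
    ((fract_nonneg y).lt_of_ne' hy)) ((fract_nonneg z).lt_of_ne' hz)
  have hlt : (k : R) < 3 := by
    rw [← hk, show (3 : R) = 1 + 1 + 1 by norm_num]
    exact add_lt_add (add_lt_add (fract_lt_one x) (fract_lt_one y)) (fract_lt_one z)
  have : k = 1 ∨ k = 2 := by
    norm_cast at hpos hlt
    omega
  rcases this with h | h <;> simp [hk, h]

end FloorRing

theorem Int.fract_intCast_div_natCast_ne_zero {k : Type*} [Field k] [LinearOrder k]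
    [IsStrictOrderedRing k] [FloorRing k] {m : ℤ} {n : ℕ} (hn : n ≠ 0) (h : ¬ (n : ℤ) ∣ m) :
    fract ((m : k) / n) ≠ 0 := by
  rw [fract_div_intCast_eq_div_intCast_mod]
  exact div_ne_zero (Int.cast_ne_zero.2 fun h' => h (Int.dvd_of_emod_eq_zero h'))
    (Nat.cast_ne_zero.2 hn)

theorem Finset.card_filter_eq_card_div_two_of_involution {α : Type*} {s : Finset α}
    {P : α → Prop} [DecidablePred P] (f : α → α) (hf : ∀ a ∈ s, f a ∈ s)
    (hff : ∀ a ∈ s, f (f a) = a) (hP : ∀ a ∈ s, P (f a) ↔ ¬ P a) :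
    #(s.filter P) = #s / 2 := by
  have hswap : #(s.filter P) = #(s.filter (¬ P ·)) := by
    refine card_bij' (fun a _ => f a) (fun a _ => f a) ?_ ?_ ?_ ?_ <;>
      simp only [mem_filter] <;> intro a ha
    · exact ⟨hf a ha.1, fun h => (hP a ha.1).1 h ha.2⟩
    · exact ⟨hf a ha.1, (hP a ha.1).2 ha.2⟩
    · exact hff a ha.1
    · exact hff a ha.1
  have := card_filter_add_card_filter_not (s := s) P
  omega

theorem fract_mul_div_ne_zero_of_prime {p : ℕ} (hp : p.Prime) {a u : ℤ} (ha : ¬ (p : ℤ) ∣ a)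
    (hu : u ∈ Set.Ioo 0 (p : ℤ)) : fract ((a * u : ℚ) / p) ≠ 0 := by
  have hau : ¬ (p : ℤ) ∣ a * u := by
    rw [(Nat.prime_iff_prime_int.1 hp).dvd_mul, not_or]
    exact ⟨ha, fun h => (Int.le_of_dvd hu.1 h).not_gt hu.2⟩
  exact_mod_cast fract_intCast_div_natCast_ne_zero (k := ℚ) hp.ne_zero hau

def fractSum (p : ℕ) (r s t : ℤ) (x : ℚ) : ℚ :=
  fract (x * r / p) + fract (x * s / p) + fract (x * t / p)

section FractSum

variable {p : ℕ} {r s t : ℤ}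

theorem fractSum_eq_one_or_two (hp : p.Prime) (hr : r ∈ Set.Ioo 0 (p : ℤ))
    (hs : s ∈ Set.Ioo 0 (p : ℤ)) (ht : t ∈ Set.Ioo 0 (p : ℤ)) (hsum : r + s + t = p) {a : ℤ}
    (ha : ¬ (p : ℤ) ∣ a) : fractSum p r s t a = 1 ∨ fractSum p r s t a = 2 := by
  have hsumQ : (r + s + t : ℚ) = p := by exact_mod_cast hsum
  refine fract_add_fract_add_fract_eq_one_or_two (n := a) ?_
    (fract_mul_div_ne_zero_of_prime hp ha hr) (fract_mul_div_ne_zero_of_prime hp ha hs)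
    (fract_mul_div_ne_zero_of_prime hp ha ht)
  rw [← add_div, ← add_div, ← mul_add, ← mul_add, hsumQ,
    mul_div_cancel_right₀ _ (Nat.cast_ne_zero.2 hp.ne_zero)]

theorem fractSum_sub_eq_three_sub (hp : p.Prime) (hr : r ∈ Set.Ioo 0 (p : ℤ))
    (hs : s ∈ Set.Ioo 0 (p : ℤ)) (ht : t ∈ Set.Ioo 0 (p : ℤ)) {a : ℤ} (ha : ¬ (p : ℤ) ∣ a) :
    fractSum p r s t (p - a) = 3 - fractSum p r s t a := by
  have hp0 : (p : ℚ) ≠ 0 := Nat.cast_ne_zero.2 hp.ne_zero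
  have reflect : ∀ u : ℤ, u ∈ Set.Ioo 0 (p : ℤ) →
      fract (((p : ℚ) - a) * u / p) = 1 - fract ((a * u : ℚ) / p) := by
    intro u hu
    rw [show ((p : ℚ) - a) * u / p = u - a * u / p by field_simp]
    exact fract_intCast_sub u (fract_mul_div_ne_zero_of_prime hp ha hu)
  simp only [fractSum, reflect r hr, reflect s hs, reflect t ht]
  ring

theorem card_filter_fractSum_eq_one (hp : p.Prime) (hr : r ∈ Set.Ioo 0 (p : ℤ))
    (hs : s ∈ Set.Ioo 0 (p : ℤ)) (ht : t ∈ Set.Ioo 0 (p : ℤ)) (hsum : r + s + t = p) :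
    #((Icc 1 (p - 1)).filter (fun a : ℕ => fractSum p r s t a = 1)) = (p - 1) / 2 := by
  have hndvd : ∀ a ∈ Icc 1 (p - 1), ¬ (p : ℤ) ∣ (a : ℤ) := by
    intro a ha
    rw [mem_Icc] at ha
    exact_mod_cast Nat.not_dvd_of_pos_of_lt ha.1 (by omega)
  rw [card_filter_eq_card_div_two_of_involution (fun a => p - a), Nat.card_Icc,
    Nat.add_sub_cancel]
  · intro a ha
    rw [mem_Icc] at ha ⊢
    omega
  · intro a ha
    rw [mem_Icc] at ha
    omega
  · intro a ha
    have hS := fractSum_eq_one_or_two hp hr hs ht hsum (hndvd a ha)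
    have hap : a ≤ p := by
      rw [mem_Icc] at ha
      omega
    rw [Int.cast_natCast] at hS
    rw [Nat.cast_sub hap, ← Int.cast_natCast (R := ℚ) a,
      fractSum_sub_eq_three_sub hp hr hs ht (hndvd a ha), Int.cast_natCast]
    rcases hS with h | h <;> norm_num [h]

end FractSum

/-- Let `p` be prime and `r, s, t` integers with `0 < r, s, t < p` and `r + s + t = p`. For any
integer `a` not divisible by `p`, the sum `⟨ar/p⟩ + ⟨as/p⟩ + ⟨at/p⟩` of fractional parts equals
either `1` or `2`; this sum equals `1` for `a` iff it equals `2` for `p - a`; and the set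
`Φ = {a ∈ (ℤ/pℤ)^* : ⟨ar/p⟩ + ⟨as/p⟩ + ⟨at/p⟩ = 1}` has exactly `(p-1)/2` elements. -/
theorem fract_sum_one_or_two (p : ℕ) (hp : p.Prime) (r s t : ℤ)
    (hr0 : 0 < r) (hrp : r < p) (hs0 : 0 < s) (hsp : s < p) (ht0 : 0 < t) (htp : t < p)
    (hsum : r + s + t = p) :
    (∀ a : ℤ, ¬ (p : ℤ) ∣ a →
      Int.fract ((a * r : ℚ) / p) + Int.fract ((a * s : ℚ) / p) + Int.fract ((a * t : ℚ) / p) = 1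
        ∨ Int.fract ((a * r : ℚ) / p) + Int.fract ((a * s : ℚ) / p)
            + Int.fract ((a * t : ℚ) / p) = 2) ∧
    (∀ a : ℤ, ¬ (p : ℤ) ∣ a →
      (Int.fract ((a * r : ℚ) / p) + Int.fract ((a * s : ℚ) / p)
          + Int.fract ((a * t : ℚ) / p) = 1 ↔
        Int.fract (((p - a) * r : ℚ) / p) + Int.fract (((p - a) * s : ℚ) / p)
          + Int.fract (((p - a) * t : ℚ) / p) = 2)) ∧
    ((Finset.Icc 1 (p - 1)).filter (fun a : ℕ =>
        Int.fract ((a * r : ℚ) / p) + Int.fract ((a * s : ℚ) / p)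
          + Int.fract ((a * t : ℚ) / p) = 1)).card = (p - 1) / 2 := by
  have hr : r ∈ Set.Ioo 0 (p : ℤ) := ⟨hr0, hrp⟩
  have hs : s ∈ Set.Ioo 0 (p : ℤ) := ⟨hs0, hsp⟩
  have ht : t ∈ Set.Ioo 0 (p : ℤ) := ⟨ht0, htp⟩
  refine ⟨fun a ha => fractSum_eq_one_or_two hp hr hs ht hsum ha, fun a ha => ?_,
    card_filter_fractSum_eq_one hp hr hs ht hsum⟩
  change fractSum p r s t a = 1 ↔ fractSum p r s t (p - a) = 2
  rw [fractSum_sub_eq_three_sub hp hr hs ht ha]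
  constructor <;> intro h <;> linarith
end

section
/- Let p > 3 be a prime with p ≡ 3 (mod 4), let k = ℚ(√-p) with a fixed embedding k ↪ ℂ, and set n = (p-1)/2. Let r be an integer with 0 < r < p and (r|p) = -1. Then there exists a nonzero element z of k (viewed in ℂ) such that Π_{1≤a≤p-1, (a|p)=+1} Γ(⟨ar/p⟩) = z · (2πi)^n / Π_{1≤a≤p-1, (a|p)=+1} Γ(a/p). -/
/-! Multiplication by the nonresidue `r` permutes the nonzero classes mod `p` and swaps residues
with nonresidues, so the left-hand side is `∏_{(b|p)=-1} Γ(b/p)`. Times the residue product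
`∏_{(a|p)=1} Γ(a/p)` this is the full product `∏_{a=1}^{p-1} Γ(a/p)`, whose square is
`(2π)^(p-1)/p` by Euler's reflection formula and `∏ 2 sin(πa/p) = ∏ |1 - ζ^a| = p` for a
primitive `p`-th root of unity `ζ`. So the quotient is `(2π)^n/√p = z (2πi)^n` with
`z = i^(-n)/√p = ±i√p/p ∈ k`, as `n` is odd. -/

open Finset Real Complex

theorem norm_one_sub_exp_two_pi_I_div_pow {n k : ℕ} (hk0 : 0 < k) (hkn : k < n) :
    ‖1 - Complex.exp (2 * π * I / n) ^ k‖ = 2 * Real.sin (π * k / n) := by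
  have hn : (0 : ℝ) < n := by exact_mod_cast hk0.trans hkn
  have hsin : 0 < Real.sin (π * k / n) := by
    apply Real.sin_pos_of_pos_of_lt_pi (by positivity)
    rw [div_lt_iff₀ hn, mul_lt_mul_iff_right₀ pi_pos]
    exact_mod_cast hkn
  have hexp : Complex.exp (2 * π * I / n) ^ k = Complex.exp (I * ↑(2 * (π * k / n))) := by
    rw [← Complex.exp_nat_mul]; congr 1; push_cast; ring
  rw [norm_sub_rev, hexp, Complex.norm_exp_I_mul_ofReal_sub_one,
    mul_div_cancel_left₀ _ two_ne_zero, Real.norm_eq_abs, abs_of_pos (by positivity)]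

theorem prod_two_mul_sin_pi_mul_div {n : ℕ} (hn : n ≠ 0) :
    ∏ k ∈ Icc 1 (n - 1), 2 * Real.sin (π * k / n) = n := by
  obtain ⟨m, rfl⟩ := Nat.exists_add_one_eq.2 (Nat.pos_of_ne_zero hn)
  have key := congrArg (‖·‖) (isPrimitiveRoot_exp (m + 1) hn).prod_one_sub_pow_eq_order
  simp only [norm_prod] at key
  rw [prod_congr rfl fun k hk => norm_one_sub_exp_two_pi_I_div_pow k.succ_pos
    (by simpa using mem_range.1 hk)] at key
  rw [Nat.add_sub_cancel, ← Finset.Ico_add_one_right_eq_Icc, prod_Ico_eq_prod_range]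
  norm_cast at key ⊢
  simpa [add_comm 1] using key

theorem prod_Gamma_div_sq {n : ℕ} (hn : n ≠ 0) :
    (∏ a ∈ Icc 1 (n - 1), Real.Gamma (a / n)) ^ 2 = (2 * π) ^ (n - 1) / n := by
  have hreflect : ∏ a ∈ Icc 1 (n - 1), Real.Gamma (a / n)
      = ∏ a ∈ Icc 1 (n - 1), Real.Gamma (1 - a / n) := by
    refine prod_nbij' (n - ·) (n - ·) ?_ ?_ ?_ ?_ fun a ha => ?_
    any_goals simp only [mem_Icc]; intro a ha; omega
    rw [Nat.cast_sub ((mem_Icc.1 ha).2.trans (n.sub_le 1)), sub_div, div_self (by positivity),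
      sub_sub_cancel]
  calc (∏ a ∈ Icc 1 (n - 1), Real.Gamma (a / n)) ^ 2
      = ∏ a ∈ Icc 1 (n - 1), Real.Gamma (a / n) * Real.Gamma (1 - a / n) := by
        rw [sq]; nth_rw 2 [hreflect]; rw [prod_mul_distrib]
    _ = ∏ a ∈ Icc 1 (n - 1), 2 * π / (2 * Real.sin (π * a / n)) := by
        refine prod_congr rfl fun a _ => ?_
        rw [Real.Gamma_mul_Gamma_one_sub, mul_div_mul_left _ _ two_ne_zero, mul_div_assoc]
    _ = (2 * π) ^ (n - 1) / n := by
        rw [prod_div_distrib, prod_two_mul_sin_pi_mul_div hn, prod_const, Nat.card_Icc,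
          Nat.add_sub_cancel]

theorem prod_Gamma_div_of_odd {n : ℕ} (hn : Odd n) :
    ∏ a ∈ Icc 1 (n - 1), Real.Gamma (a / n) = (2 * π) ^ ((n - 1) / 2) / √n := by
  have hn0 : (0 : ℝ) < n := by exact_mod_cast hn.pos
  refine (sq_eq_sq₀ (prod_nonneg fun a ha => (Real.Gamma_pos_of_pos ?_).le)
    (by positivity)).1 ?_
  · have : 1 ≤ a := (mem_Icc.1 ha).1
    positivity
  rw [prod_Gamma_div_sq hn.pos.ne', div_pow, Real.sq_sqrt hn0.le, ← pow_mul,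
    Nat.div_mul_cancel (Nat.Odd.sub_odd hn odd_one).two_dvd]

theorem mul_mod_mul_mod_eq_of_natCast_mul_eq_one {n a t u : ℕ} (htu : (t : ZMod n) * u = 1)
    (ha : a < n) : a * t % n * u % n = a := by
  rw [← ZMod.val_natCast]
  push_cast [ZMod.natCast_mod]
  rw [mul_assoc, htu, mul_one, ZMod.val_natCast, Nat.mod_eq_of_lt ha]

section Legendre

variable {p : ℕ} [Fact p.Prime]

theorem legendreSym_natCast (x : ℕ) : legendreSym p x = quadraticChar (ZMod p) x := by
  rw [legendreSym, Int.cast_natCast]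

theorem mod_mem_filter_legendreSym_iff {ε : ℤ} (hε : ε ≠ 0) (x : ℕ) :
    x % p ∈ (Icc 1 (p - 1)).filter (fun a : ℕ => legendreSym p a = ε) ↔
      legendreSym p x = ε := by
  have hp := (Fact.out : p.Prime).pos
  rw [mem_filter, mem_Icc, legendreSym_natCast, legendreSym_natCast, ZMod.natCast_mod,
    and_iff_right_iff_imp]
  intro hx
  have hx0 : x % p ≠ 0 := by
    rw [Ne, ← Nat.dvd_iff_mod_eq_zero, ← ZMod.natCast_eq_zero_iff,
      ← quadraticChar_eq_zero_iff]
    exact hx ▸ hε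
  have := Nat.mod_lt x hp
  omega

theorem prod_filter_legendreSym_one_mul_neg_one {M : Type*} [CommMonoid M] (f : ℕ → M) :
    (∏ a ∈ (Icc 1 (p - 1)).filter (fun a : ℕ => legendreSym p a = 1), f a) *
      ∏ a ∈ (Icc 1 (p - 1)).filter (fun a : ℕ => legendreSym p a = -1), f a
      = ∏ a ∈ Icc 1 (p - 1), f a := by
  rw [← prod_filter_mul_prod_filter_not (Icc 1 (p - 1)) (fun a : ℕ => legendreSym p a = 1)]
  congr 2
  refine filter_congr fun a ha => ?_
  have ha0 : (a : ZMod p) ≠ 0 := by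
    rw [Ne, ZMod.natCast_eq_zero_iff]
    exact fun h => absurd (Nat.le_of_dvd (mem_Icc.1 ha).1 h) (by grind)
  rw [legendreSym_natCast]
  rcases quadraticChar_dichotomy ha0 with h | h <;> simp [h]

theorem prod_filter_legendreSym_one_comp_mul_mod {M : Type*} [CommMonoid M] {r : ℕ}
    (hr : legendreSym p r = -1) (f : ℕ → M) :
    ∏ a ∈ (Icc 1 (p - 1)).filter (fun a : ℕ => legendreSym p a = 1), f (a * r % p)
      = ∏ b ∈ (Icc 1 (p - 1)).filter (fun a : ℕ => legendreSym p a = -1), f b := by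
  rw [legendreSym_natCast] at hr
  have hr0 : (r : ZMod p) ≠ 0 := by
    rw [Ne, ← quadraticChar_eq_zero_iff, hr]; decide
  obtain ⟨s, hrs⟩ : ∃ s : ℕ, (r : ZMod p) * s = 1 :=
    ⟨((r : ZMod p)⁻¹).val, by rw [ZMod.natCast_val, ZMod.cast_id, mul_inv_cancel₀ hr0]⟩
  have hs : quadraticChar (ZMod p) s = -1 := by
    have h := map_mul (quadraticChar (ZMod p)) (r : ZMod p) s
    rw [hrs, map_one, hr] at h
    linarith
  have hcancel {a t u : ℕ} (htu : (t : ZMod p) * u = 1) (ha : a ∈ Icc 1 (p - 1)) :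
      a * t % p * u % p = a :=
    mul_mod_mul_mod_eq_of_natCast_mul_eq_one htu (by grind)
  refine prod_nbij' (· * r % p) (· * s % p) (fun a ha => ?_) (fun b hb => ?_)
    (fun a ha => hcancel hrs (mem_filter.1 ha).1)
    (fun b hb => hcancel (by rwa [mul_comm]) (mem_filter.1 hb).1) (fun _ _ => rfl)
  · have ha := (mem_filter.1 ha).2
    rw [legendreSym_natCast] at ha
    rw [mod_mem_filter_legendreSym_iff (by decide), legendreSym_natCast, Nat.cast_mul, map_mul,
      ha, hr, one_mul]
  · have hb := (mem_filter.1 hb).2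
    rw [legendreSym_natCast] at hb
    rw [mod_mem_filter_legendreSym_iff one_ne_zero, legendreSym_natCast, Nat.cast_mul, map_mul,
      hb, hs, neg_one_mul, neg_neg]

end Legendre

theorem I_mul_sqrt_div_mul_two_pi_I_pow {n : ℕ} (hn : Odd n) {x : ℝ} (hx : 0 < x) :
    (-1) ^ ((n + 1) / 2) * (I * √x) / x * (2 * π * I) ^ n = ((2 * π) ^ n / √x : ℝ) := by
  have hI : I ^ (n + 1) = (-1) ^ ((n + 1) / 2) := by
    rw [← I_sq, ← pow_mul, Nat.two_mul_div_two_of_even hn.add_one]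
  have hsign : ((-1 : ℂ) ^ ((n + 1) / 2)) ^ 2 = 1 := by
    rw [← pow_mul, mul_comm, pow_mul, neg_one_sq, one_pow]
  have hsqrt : ((√x : ℝ) : ℂ) ^ 2 = x := by
    rw [← ofReal_pow, sq_sqrt hx.le]
  have hsqrt0 : ((√x : ℝ) : ℂ) ≠ 0 := ofReal_ne_zero.2 (sqrt_pos.2 hx).ne'
  rw [← hsqrt]
  push_cast
  field_simp
  linear_combination (2 * π) ^ n * (-1) ^ ((n + 1) / 2) * hI + (2 * π) ^ n * hsign

theorem prod_Gamma_fract_nonresidue_general (p : ℕ) [Fact p.Prime]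
    (hp4 : p % 4 = 3) (n : ℕ) (hn : n = (p - 1) / 2)
    (r : ℕ) (hr : legendreSym p r = -1) :
    ∃ z : ℂ, z ≠ 0 ∧
      z ∈ Algebra.adjoin ℚ ({Complex.I * Real.sqrt p} : Set ℂ) ∧
      ∏ a ∈ (Finset.Icc 1 (p - 1)).filter (fun a : ℕ => legendreSym p a = 1),
          Complex.Gamma ((Int.fract ((a * r : ℝ) / p) : ℝ) : ℂ)
        = z * (2 * (Real.pi : ℂ) * Complex.I) ^ n /
            ∏ a ∈ (Finset.Icc 1 (p - 1)).filter (fun a : ℕ => legendreSym p a = 1),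
              Complex.Gamma (((a : ℝ) / p : ℝ) : ℂ) := by
  have hp : (0 : ℝ) < p := by exact_mod_cast (Fact.out : p.Prime).pos
  have hp_odd : Odd p := Nat.odd_iff.2 (by omega)
  have hn_odd : Odd n := Nat.odd_iff.2 (by omega)
  set A := ∏ a ∈ (Icc 1 (p - 1)).filter (fun a : ℕ => legendreSym p a = 1), Real.Gamma (a / p)
  set B := ∏ a ∈ (Icc 1 (p - 1)).filter (fun a : ℕ => legendreSym p a = -1),
    Real.Gamma (a / p)
  have hA : 0 < A := prod_pos fun a ha => Real.Gamma_pos_of_pos <| by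
    have : 1 ≤ a := (mem_Icc.1 (mem_filter.1 ha).1).1
    positivity
  have hAB : A * B = (2 * π) ^ n / √p := by
    rw [prod_filter_legendreSym_one_mul_neg_one, prod_Gamma_div_of_odd hp_odd, hn]
  have hfract (a : ℕ) : Int.fract ((a * r : ℝ) / p) = ((a * r % p : ℕ) : ℝ) / p := by
    rw [← Int.fract_div_natCast_eq_div_natCast_mod, Nat.cast_mul]
  refine ⟨(-1) ^ ((n + 1) / 2) * (I * √p) / (p : ℝ), by simp [Nat.Prime.ne_zero Fact.out],
    ?_, ?_⟩
  · have hsmul : (-1) ^ ((n + 1) / 2) * (I * √p) / (p : ℝ)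
        = ((-1) ^ ((n + 1) / 2) / p : ℚ) • (I * √p) := by
      rw [Rat.smul_def]; push_cast; ring
    rw [hsmul]
    exact Subalgebra.smul_mem _ (Algebra.self_mem_adjoin_singleton ℚ _) _
  · simp only [hfract, Complex.Gamma_ofReal, ← ofReal_prod]
    rw [prod_filter_legendreSym_one_comp_mul_mod hr (fun b : ℕ => Real.Gamma (b / p)),
      I_mul_sqrt_div_mul_two_pi_I_pow hn_odd hp, ← hAB, ofReal_mul,
      mul_div_cancel_left₀ _ (ofReal_ne_zero.2 hA.ne')]

/-- Let `p > 3` be a prime with `p ≡ 3 (mod 4)`, `k = ℚ(√-p) ⊆ ℂ` (via the embedding sending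
`√-p` to `i√p`), and `n = (p-1)/2`. If `0 < r < p` and `(r|p) = -1`, then there is a nonzero
`z ∈ k` with `∏_{(a|p)=1} Γ(⟨ar/p⟩) = z · (2πi)^n / ∏_{(a|p)=1} Γ(a/p)`. -/
theorem prod_Gamma_fract_nonresidue (p : ℕ) [Fact p.Prime]
    (hp4 : p % 4 = 3) (hp : 3 < p) (n : ℕ) (hn : n = (p - 1) / 2)
    (r : ℕ) (hr0 : 0 < r) (hrp : r < p) (hr : legendreSym p r = -1) :
    ∃ z : ℂ, z ≠ 0 ∧
      z ∈ Algebra.adjoin ℚ ({Complex.I * Real.sqrt p} : Set ℂ) ∧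
      ∏ a ∈ (Finset.Icc 1 (p - 1)).filter (fun a : ℕ => legendreSym p a = 1),
          Complex.Gamma ((Int.fract ((a * r : ℝ) / p) : ℝ) : ℂ)
        = z * (2 * (Real.pi : ℂ) * Complex.I) ^ n /
            ∏ a ∈ (Finset.Icc 1 (p - 1)).filter (fun a : ℕ => legendreSym p a = 1),
              Complex.Gamma (((a : ℝ) / p : ℝ) : ℂ) :=
  prod_Gamma_fract_nonresidue_general p hp4 n hn r hr
end

section
/- Let p > 3 be a prime with p ≡ 3 (mod 4) and let k = ℚ(√-p) with a fixed embedding k ↪ ℂ. Let r, s, t be integers with 0 < r, s, t < p and r + s + t = p, and suppose (r|p) + (s|p) + (t|p) = 1. Then there exists a nonzero element z of k (viewed in ℂ) such that Π_{1≤a≤p-1, (a|p)=+1} B(⟨ar/p⟩, ⟨as/p⟩) = z · Π_{1≤a≤p-1, (a|p)=+1} Γ(a/p), where B is Euler's beta function. -/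
/-!
Write `x_a = ⟨ar/p⟩`, `y_a = ⟨as/p⟩`. Since `B(x, y) = Γ(x)Γ(y)/Γ(x + y)` and `x_a + y_a`
differs from `⟨a(p - t)/p⟩` by `0` or `1`, the functional equation `Γ(w + 1) = wΓ(w)` shows that
`B(x_a, y_a)` is a rational multiple of `Γ(x_a)Γ(y_a)/Γ(⟨a(p - t)/p⟩)`. As `a` runs over the
quadratic residues, `a c mod p` runs over the residues `b` with `(b|p) = (c|p)`, so the product is a
rational multiple of `P_{(r|p)} P_{(s|p)} / P_{-(t|p)}`, where `P_ε = ∏_{(b|p) = ε} Γ(b/p)` and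
`(p - t|p) = -(t|p)` because `p ≡ 3 (mod 4)`. Two of the signs `(r|p), (s|p), (t|p)` are `+1` and
one is `-1`, and in each case the quotient collapses to `P_1`.
-/

open Finset

/-- The equivalence `∼`, with `ℚ^*` in place of `k^*`. -/
def RatEquiv (z w : ℂ) : Prop := ∃ q : ℚ, q ≠ 0 ∧ z = q * w

namespace RatEquiv

theorem refl (z : ℂ) : RatEquiv z z := ⟨1, one_ne_zero, by simp⟩

theorem ratCast_mul {q : ℚ} (hq : q ≠ 0) (z : ℂ) : RatEquiv (q * z) z := ⟨q, hq, rfl⟩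

theorem trans {x y z : ℂ} : RatEquiv x y → RatEquiv y z → RatEquiv x z := by
  rintro ⟨q, hq, rfl⟩ ⟨q', hq', rfl⟩
  exact ⟨q * q', mul_ne_zero hq hq', by push_cast; ring⟩

theorem mul {x y z w : ℂ} : RatEquiv x y → RatEquiv z w → RatEquiv (x * z) (y * w) := by
  rintro ⟨q, hq, rfl⟩ ⟨q', hq', rfl⟩
  exact ⟨q * q', mul_ne_zero hq hq', by push_cast; ring⟩

theorem div {x y z w : ℂ} : RatEquiv x y → RatEquiv z w → RatEquiv (x / z) (y / w) := by
  rintro ⟨q, hq, rfl⟩ ⟨q', hq', rfl⟩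
  exact ⟨q / q', div_ne_zero hq hq', by push_cast; ring⟩

theorem prod {ι : Type*} (s : Finset ι) {f g : ι → ℂ} (h : ∀ i ∈ s, RatEquiv (f i) (g i)) :
    RatEquiv (∏ i ∈ s, f i) (∏ i ∈ s, g i) := by
  classical
  induction s using Finset.induction_on with
  | empty => exact refl 1
  | insert i s hi ih =>
    rw [prod_insert hi, prod_insert hi]
    exact (h i (mem_insert_self i s)).mul (ih fun j hj => h j (mem_insert_of_mem hj))

end RatEquiv

theorem Complex.Gamma_ratCast_add_nat_ratEquiv {q : ℚ} (hq : 0 < q) (n : ℕ) :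
    RatEquiv (Gamma (q + n)) (Gamma q) := by
  induction n with
  | zero => simpa using RatEquiv.refl _
  | succ n ih =>
    have hqn : q + n ≠ 0 := by positivity
    rw [Nat.cast_succ, ← add_assoc, Gamma_add_one _ (by exact_mod_cast hqn)]
    have h := (RatEquiv.ratCast_mul hqn (Gamma (q + n))).trans ih
    push_cast at h
    exact h

theorem Complex.Gamma_natCast_div_ratEquiv {p m : ℕ} [NeZero p] (hm : ¬ p ∣ m) :
    RatEquiv (Gamma (((m : ℝ) / p : ℝ) : ℂ)) (Gamma ((((m % p : ℕ) : ℝ) / p : ℝ) : ℂ)) := by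
  have hq : (0 : ℚ) < ((m % p : ℕ) : ℚ) / p := by
    have : 0 < m % p := Nat.pos_of_ne_zero fun h => hm (Nat.dvd_of_mod_eq_zero h)
    have : 0 < p := NeZero.pos p
    positivity
  have hm : ((m : ℝ) / p : ℂ) = (((m % p : ℕ) : ℚ) / p : ℚ) + (m / p : ℕ) := by
    have hp : (p : ℂ) ≠ 0 := NeZero.ne _
    conv_lhs => rw [← Nat.mod_add_div m p]
    push_cast
    field_simp
  have := Gamma_ratCast_add_nat_ratEquiv hq (m / p)
  push_cast at this hm ⊢
  rwa [hm]

theorem Complex.betaIntegral_natCast_div_ratEquiv {p x y : ℕ} [NeZero p] (hx : 0 < x)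
    (hy : 0 < y) (hxy : ¬ p ∣ x + y) :
    RatEquiv (betaIntegral (((x : ℝ) / p : ℝ) : ℂ) (((y : ℝ) / p : ℝ) : ℂ))
      (Gamma (((x : ℝ) / p : ℝ) : ℂ) * Gamma (((y : ℝ) / p : ℝ) : ℂ) /
        Gamma (((((x + y) % p : ℕ) : ℝ) / p : ℝ) : ℂ)) := by
  have hre : ∀ n : ℕ, 0 < n → 0 < (((n : ℝ) / p : ℝ) : ℂ).re := fun n hn => by
    have : 0 < p := NeZero.pos p
    rw [ofReal_re]; positivity
  have hsum : Gamma (((x : ℝ) / p : ℝ) + ((y : ℝ) / p : ℝ) : ℂ) ≠ 0 :=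
    Gamma_ne_zero_of_re_pos (by simpa [add_div] using hre (x + y) (by omega))
  rw [← mul_div_cancel_left₀ (betaIntegral _ _) hsum,
    ← Gamma_mul_Gamma_eq_betaIntegral (hre x hx) (hre y hy)]
  refine (RatEquiv.refl _).div ?_
  have := Gamma_natCast_div_ratEquiv hxy
  push_cast at this ⊢
  rwa [add_div] at this

section Legendre

variable {p : ℕ} [Fact p.Prime]

theorem not_dvd_of_mem_Icc_one_sub_one {a : ℕ} (ha : a ∈ Icc 1 (p - 1)) : ¬ p ∣ a := by
  have := (Fact.out : p.Prime).one_lt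
  rw [mem_Icc] at ha
  exact Nat.not_dvd_of_pos_of_lt (by omega) (by omega)

theorem mul_mod_mem_Icc_one_sub_one {a c : ℕ} (ha : ¬ p ∣ a) (hc : ¬ p ∣ c) :
    a * c % p ∈ Icc 1 (p - 1) := by
  have hp := (Fact.out : p.Prime)
  have h0 : a * c % p ≠ 0 := fun h => (hp.dvd_mul.mp (Nat.dvd_of_mod_eq_zero h)).elim ha hc
  have := Nat.mod_lt (a * c) hp.pos
  rw [mem_Icc]
  omega

theorem legendreSym_natCast_eq_one_or_neg_one {c : ℕ} (hc : ¬ p ∣ c) :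
    legendreSym p c = 1 ∨ legendreSym p c = -1 :=
  legendreSym.eq_one_or_neg_one p (by rwa [Int.cast_natCast, Ne, ZMod.natCast_eq_zero_iff])

theorem legendreSym_natCast_mul_mod (a c : ℕ) :
    legendreSym p (a * c % p : ℕ) = legendreSym p a * legendreSym p c := by
  rw [Int.natCast_mod, Nat.cast_mul, ← legendreSym.mod, legendreSym.mul]

theorem legendreSym_natCast_sub_of_mod_four_eq_three (hp4 : p % 4 = 3) {t : ℕ} (ht : t ≤ p) :
    legendreSym p (p - t : ℕ) = -legendreSym p t := by
  rw [Nat.cast_sub ht, legendreSym.mod, show (p : ℤ) - t = -t + p * 1 by ring,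
    Int.add_mul_emod_self_left, ← legendreSym.mod, legendreSym.at_neg (by omega),
    ZMod.χ₄_nat_three_mod_four hp4, neg_one_mul]

theorem prod_filter_legendreSym_eq_one_mul_mod {M : Type*} [CommMonoid M] {c : ℕ}
    (hc : ¬ p ∣ c) (f : ℕ → M) :
    ∏ a ∈ (Icc 1 (p - 1)).filter (fun a : ℕ => legendreSym p a = 1), f (a * c % p) =
      ∏ b ∈ (Icc 1 (p - 1)).filter (fun b : ℕ => legendreSym p b = legendreSym p c), f b := by
  have hp := (Fact.out : p.Prime)
  obtain ⟨c', -, hcc'⟩ := Nat.exists_mul_mod_eq_one_of_coprime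
    (Nat.coprime_comm.mp (hp.coprime_iff_not_dvd.mpr hc)) hp.one_lt
  have hc' : ¬ p ∣ c' := fun h => by simp [Nat.mul_mod, Nat.mod_eq_zero_of_dvd h] at hcc'
  have cancel : ∀ a ∈ Icc 1 (p - 1), ∀ {u v : ℕ}, u * v % p = 1 → a * u % p * v % p = a := by
    intro a ha u v huv
    rw [Nat.mod_mul_mod, mul_assoc, ← Nat.mul_mod_mod, huv, mul_one,
      Nat.mod_eq_of_lt (by rw [mem_Icc] at ha; omega)]
  refine prod_nbij' (· * c % p) (· * c' % p) ?_ ?_ ?_ ?_ fun _ _ => rfl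
  · rintro a ha
    obtain ⟨ha, hχ⟩ := mem_filter.mp ha
    exact mem_filter.mpr ⟨mul_mod_mem_Icc_one_sub_one (not_dvd_of_mem_Icc_one_sub_one ha) hc,
      by rw [legendreSym_natCast_mul_mod, hχ, one_mul]⟩
  · rintro b hb
    obtain ⟨hb, hχ⟩ := mem_filter.mp hb
    refine mem_filter.mpr ⟨mul_mod_mem_Icc_one_sub_one (not_dvd_of_mem_Icc_one_sub_one hb) hc', ?_⟩
    rw [legendreSym_natCast_mul_mod, hχ, ← legendreSym_natCast_mul_mod, hcc', Nat.cast_one,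
      legendreSym.at_one]
  · exact fun a ha => cancel a (mem_filter.mp ha).1 hcc'
  · exact fun b hb => cancel b (mem_filter.mp hb).1 (by rwa [mul_comm])

end Legendre

theorem betaIntegral_fract_mul_div_ratEquiv {p a r s : ℕ} [Fact p.Prime] (ha : ¬ p ∣ a)
    (hr : ¬ p ∣ r) (hs : ¬ p ∣ s) (hrs : ¬ p ∣ r + s) :
    RatEquiv
      (Complex.betaIntegral ((Int.fract ((a * r : ℝ) / p) : ℝ) : ℂ)
        ((Int.fract ((a * s : ℝ) / p) : ℝ) : ℂ))
      (Complex.Gamma ((((a * r % p : ℕ) : ℝ) / p : ℝ) : ℂ) *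
        Complex.Gamma ((((a * s % p : ℕ) : ℝ) / p : ℝ) : ℂ) /
          Complex.Gamma ((((a * (r + s) % p : ℕ) : ℝ) / p : ℝ) : ℂ)) := by
  have : NeZero p := ⟨(Fact.out : p.Prime).ne_zero⟩
  have hmod : (a * r % p + a * s % p) % p = a * (r + s) % p := by rw [← Nat.add_mod, mul_add]
  have := Complex.betaIntegral_natCast_div_ratEquiv
    (mem_Icc.mp (mul_mod_mem_Icc_one_sub_one ha hr)).1
    (mem_Icc.mp (mul_mod_mem_Icc_one_sub_one ha hs)).1
    (by rw [Nat.dvd_iff_mod_eq_zero, hmod]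
        exact Nat.one_le_iff_ne_zero.mp (mem_Icc.mp (mul_mod_mem_Icc_one_sub_one ha hrs)).1)
  rw [hmod] at this
  rwa [← Nat.cast_mul, ← Nat.cast_mul, Int.fract_div_natCast_eq_div_natCast_mod,
    Int.fract_div_natCast_eq_div_natCast_mod]

section GammaProd

variable {p : ℕ} [Fact p.Prime]

variable (p) in
noncomputable def gammaProd (ε : ℤ) : ℂ :=
  ∏ b ∈ (Icc 1 (p - 1)).filter (fun b : ℕ => legendreSym p b = ε),
    Complex.Gamma (((b : ℝ) / p : ℝ) : ℂ)

theorem gammaProd_ne_zero (ε : ℤ) : gammaProd p ε ≠ 0 := by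
  refine prod_ne_zero_iff.mpr fun b hb => Complex.Gamma_ne_zero_of_re_pos ?_
  have := (mem_Icc.mp (mem_filter.mp hb).1).1
  have := (Fact.out : p.Prime).pos
  rw [Complex.ofReal_re]
  positivity

theorem prod_Gamma_mul_mod_eq_gammaProd {c : ℕ} (hc : ¬ p ∣ c) :
    ∏ a ∈ (Icc 1 (p - 1)).filter (fun a : ℕ => legendreSym p a = 1),
      Complex.Gamma ((((a * c % p : ℕ) : ℝ) / p : ℝ) : ℂ) = gammaProd p (legendreSym p c) :=
  prod_filter_legendreSym_eq_one_mul_mod hc fun j => Complex.Gamma (((j : ℝ) / p : ℝ) : ℂ)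

theorem gammaProd_mul_div_gammaProd_neg {ε₁ ε₂ ε₃ : ℤ} (h₁ : ε₁ = 1 ∨ ε₁ = -1)
    (h₂ : ε₂ = 1 ∨ ε₂ = -1) (h₃ : ε₃ = 1 ∨ ε₃ = -1) (h : ε₁ + ε₂ + ε₃ = 1) :
    gammaProd p ε₁ * gammaProd p ε₂ / gammaProd p (-ε₃) = gammaProd p 1 := by
  rcases h₁ with rfl | rfl <;> rcases h₂ with rfl | rfl <;> rcases h₃ with rfl | rfl <;>
    norm_num at h
  · rw [neg_neg, mul_div_cancel_right₀ _ (gammaProd_ne_zero 1)]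
  · exact mul_div_cancel_right₀ _ (gammaProd_ne_zero (-1))
  · exact mul_div_cancel_left₀ _ (gammaProd_ne_zero (-1))

end GammaProd

theorem prod_beta_fract_eq_prod_Gamma_general (p : ℕ) [Fact p.Prime]
    (hp4 : p % 4 = 3)
    (r s t : ℕ)
    (hr0 : 0 < r) (hrp : r < p) (hs0 : 0 < s) (hsp : s < p) (ht0 : 0 < t) (htp : t < p)
    (hsum : r + s + t = p)
    (heps : legendreSym p r + legendreSym p s + legendreSym p t = 1) :
    ∃ z : ℂ, z ≠ 0 ∧
      z ∈ Algebra.adjoin ℚ ({Complex.I * Real.sqrt p} : Set ℂ) ∧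
      ∏ a ∈ (Finset.Icc 1 (p - 1)).filter (fun a : ℕ => legendreSym p a = 1),
          Complex.betaIntegral ((Int.fract ((a * r : ℝ) / p) : ℝ) : ℂ)
            ((Int.fract ((a * s : ℝ) / p) : ℝ) : ℂ)
        = z * ∏ a ∈ (Finset.Icc 1 (p - 1)).filter (fun a : ℕ => legendreSym p a = 1),
              Complex.Gamma (((a : ℝ) / p : ℝ) : ℂ) := by
  have hr := Nat.not_dvd_of_pos_of_lt hr0 hrp
  have hs := Nat.not_dvd_of_pos_of_lt hs0 hsp
  have ht := Nat.not_dvd_of_pos_of_lt ht0 htp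
  have hrs : r + s = p - t := by omega
  have hpt : ¬ p ∣ p - t := Nat.not_dvd_of_pos_of_lt (by omega) (by omega)
  obtain ⟨q, hq, hprod⟩ :=
    RatEquiv.prod ((Icc 1 (p - 1)).filter fun a : ℕ => legendreSym p a = 1) fun a ha =>
      betaIntegral_fract_mul_div_ratEquiv (not_dvd_of_mem_Icc_one_sub_one (mem_filter.mp ha).1)
        hr hs (hrs ▸ hpt)
  refine ⟨q, by exact_mod_cast hq, Subalgebra.algebraMap_mem _ q, ?_⟩
  rw [hprod, prod_div_distrib, prod_mul_distrib, prod_Gamma_mul_mod_eq_gammaProd hr,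
    prod_Gamma_mul_mod_eq_gammaProd hs, hrs, prod_Gamma_mul_mod_eq_gammaProd hpt,
    legendreSym_natCast_sub_of_mod_four_eq_three hp4 htp.le,
    gammaProd_mul_div_gammaProd_neg (legendreSym_natCast_eq_one_or_neg_one hr)
      (legendreSym_natCast_eq_one_or_neg_one hs) (legendreSym_natCast_eq_one_or_neg_one ht) heps]
  rfl

/-- Let `p > 3` be a prime with `p ≡ 3 (mod 4)` and `k = ℚ(√-p) ⊆ ℂ` (via the embedding sending
`√-p` to `i√p`). If `r, s, t` are integers with `0 < r, s, t < p`, `r + s + t = p`, and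
`(r|p) + (s|p) + (t|p) = 1`, then there is a nonzero `z ∈ k` with
`∏_{(a|p)=1} B(⟨ar/p⟩, ⟨as/p⟩) = z · ∏_{(a|p)=1} Γ(a/p)`,
where `B` is Euler's beta function. -/
theorem prod_beta_fract_eq_prod_Gamma (p : ℕ) [Fact p.Prime]
    (hp4 : p % 4 = 3) (hp : 3 < p)
    (r s t : ℕ)
    (hr0 : 0 < r) (hrp : r < p) (hs0 : 0 < s) (hsp : s < p) (ht0 : 0 < t) (htp : t < p)
    (hsum : r + s + t = p)
    (heps : legendreSym p r + legendreSym p s + legendreSym p t = 1) :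
    ∃ z : ℂ, z ≠ 0 ∧
      z ∈ Algebra.adjoin ℚ ({Complex.I * Real.sqrt p} : Set ℂ) ∧
      ∏ a ∈ (Finset.Icc 1 (p - 1)).filter (fun a : ℕ => legendreSym p a = 1),
          Complex.betaIntegral ((Int.fract ((a * r : ℝ) / p) : ℝ) : ℂ)
            ((Int.fract ((a * s : ℝ) / p) : ℝ) : ℂ)
        = z * ∏ a ∈ (Finset.Icc 1 (p - 1)).filter (fun a : ℕ => legendreSym p a = 1),
              Complex.Gamma (((a : ℝ) / p : ℝ) : ℂ) :=
  prod_beta_fract_eq_prod_Gamma_general p hp4 r s t hr0 hrp hs0 hsp ht0 htp hsum heps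
end

section
/- Let p > 3 be a prime with p ≡ 3 (mod 4), let k = ℚ(√-p) with ring of integers 𝒪, and let h be the class number of k. Then for every nonzero ideal 𝔞 of 𝒪 coprime to p, the ideal 𝔞^h is principal, and among its generators there is exactly one generator β whose image in the residue field 𝒪/(√-p) ≅ 𝔽_p is a nonzero square. -/
/-!
As `h` kills the class group, `𝔞 ^ h` is principal, and since `(√-p) ^ 2 = (p)` is prime to `𝔞`,
each of its generators is nonzero in `𝒪 ⧸ (√-p) ≅ 𝔽_p`. For `p > 3` the only units are `±1`:
if `σ` is the conjugation, then `m = u + σ u`, `n = √-p (u - σ u)` and `k = u σ u` are rational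
integers with `p m ^ 2 + n ^ 2 = 4 p k`; for a unit `u` this forces `k = 1`, then `n = 0`, so `u`
is a rational integer. Hence the generators are `±β`, and as `p ≡ 3 (mod 4)` makes `-1` a
non-square in `𝔽_p`, exactly one of them is a square there.
-/

open Polynomial NumberField
open scoped nonZeroDivisors

theorem FiniteField.isSquare_neg_iff_not_isSquare {F : Type*} [Field F]
    (hF : Nat.card F % 4 = 3) {x : F} (hx : x ≠ 0) : IsSquare (-x) ↔ ¬IsSquare x := by
  have : Finite F := Nat.finite_of_card_ne_zero (by omega)
  have := Fintype.ofFinite F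
  classical
  have hχ : quadraticChar F (-1) = -1 := by
    rw [quadraticChar_neg_one_iff_not_isSquare, FiniteField.isSquare_neg_one_iff,
      ← Nat.card_eq_fintype_card, hF]
    simp
  rw [← quadraticChar_one_iff_isSquare (neg_ne_zero.mpr hx),
    ← quadraticChar_neg_one_iff_not_isSquare, neg_eq_neg_one_mul, map_mul, hχ]
  omega

theorem Ideal.isPrincipal_pow_card_classGroup {R : Type*} [CommRing R] [IsDedekindDomain R]
    [Fintype (ClassGroup R)] (J : Ideal R) : (J ^ Fintype.card (ClassGroup R)).IsPrincipal := by
  rcases eq_or_ne J ⊥ with rfl | hJ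
  · rw [Ideal.bot_pow Fintype.card_ne_zero]
    exact bot_isPrincipal
  have hJ0 : J ∈ (Ideal R)⁰ := mem_nonZeroDivisors_iff_ne_zero.mpr hJ
  rw [← ClassGroup.mk0_eq_one_iff (pow_mem hJ0 _)]
  have hpow := map_pow (ClassGroup.mk0 (R := R)) ⟨J, hJ0⟩ (Fintype.card (ClassGroup R))
  rwa [pow_card_eq_one] at hpow

theorem Ideal.Quotient.mk_ne_zero_of_span_singleton_eq {R : Type*} [CommRing R] {J M : Ideal R}
    (hJM : IsCoprime J M) (hM : M ≠ ⊤) {β : R} (hβ : Ideal.span {β} = J) :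
    Ideal.Quotient.mk M β ≠ 0 := by
  rw [Ne, Ideal.Quotient.eq_zero_iff_mem, ← Ideal.span_singleton_le_iff_mem, hβ]
  intro hle
  exact hM (by simpa [sup_eq_right.mpr hle] using hJM.sup_eq)

theorem existsUnique_span_singleton_eq_and_mk_eq_sq {R : Type*} [CommRing R] [IsDomain R]
    (hunits : ∀ u : R, IsUnit u → u = 1 ∨ u = -1) {M : Ideal R} [M.IsMaximal]
    (hcard : Nat.card (R ⧸ M) % 4 = 3) {J : Ideal R} (hJ : J.IsPrincipal) (hJM : IsCoprime J M) :
    ∃! β : R, Ideal.span {β} = J ∧ Ideal.Quotient.mk M β ≠ 0 ∧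
      ∃ γ : R ⧸ M, Ideal.Quotient.mk M β = γ ^ 2 := by
  let := Ideal.Quotient.field M
  have hne : ∀ β : R, Ideal.span {β} = J → Ideal.Quotient.mk M β ≠ 0 := fun β =>
    Ideal.Quotient.mk_ne_zero_of_span_singleton_eq hJM (Ideal.IsMaximal.ne_top inferInstance)
  have hsq : ∀ β : R, Ideal.span {β} = J →
      (IsSquare (Ideal.Quotient.mk M (-β)) ↔ ¬IsSquare (Ideal.Quotient.mk M β)) :=
    fun β hβ => map_neg (Ideal.Quotient.mk M) β ▸
      FiniteField.isSquare_neg_iff_not_isSquare hcard (hne β hβ)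
  have hgen : ∀ β β' : R, Ideal.span {β} = J → Ideal.span {β'} = J → β' = β ∨ β' = -β := by
    intro β β' hβ hβ'
    obtain ⟨u, rfl⟩ := (Ideal.span_singleton_eq_span_singleton.mp (hβ.trans hβ'.symm)).symm
    rcases hunits u u.isUnit with h | h <;> simp [h]
  simp only [← isSquare_iff_exists_sq]
  obtain ⟨β₀, hβ₀⟩ := hJ.principal
  have hβ₀ : Ideal.span {β₀} = J := hβ₀.symm
  have hβ₀' : Ideal.span {-β₀} = J := by rw [Ideal.span_singleton_neg, hβ₀]
  obtain ⟨β, hβ, hβsq⟩ : ∃ β, Ideal.span {β} = J ∧ IsSquare (Ideal.Quotient.mk M β) := by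
    by_cases h : IsSquare (Ideal.Quotient.mk M β₀)
    · exact ⟨β₀, hβ₀, h⟩
    · exact ⟨-β₀, hβ₀', (hsq β₀ hβ₀).mpr h⟩
  refine ⟨β, ⟨hβ, hne β hβ, hβsq⟩, fun β' ⟨hβ', _, hβ'sq⟩ => ?_⟩
  rcases hgen β β' hβ hβ' with rfl | rfl
  · rfl
  · exact absurd hβsq ((hsq β hβ).mp hβ'sq)

section QuadraticField

variable {K : Type*} [Field K] [CharZero K] {d : ℚ} {α : K}

theorem exists_ratCast_add_mul_eq (hα : α ^ 2 = d) (hgen : Algebra.adjoin ℚ {α} = ⊤) (x : K) :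
    ∃ a b : ℚ, x = a + b * α := by
  have hx : x ∈ Algebra.adjoin ℚ {α} := hgen ▸ Algebra.mem_top
  induction hx using Algebra.adjoin_induction with
  | mem y hy => exact ⟨0, 1, by simp [Set.mem_singleton_iff.mp hy]⟩
  | algebraMap q => exact ⟨q, 0, by simp⟩
  | add y z _ _ ihy ihz =>
    obtain ⟨a, b, rfl⟩ := ihy
    obtain ⟨c, e, rfl⟩ := ihz
    exact ⟨a + c, b + e, by push_cast; ring⟩
  | mul y z _ _ ihy ihz =>
    obtain ⟨a, b, rfl⟩ := ihy
    obtain ⟨c, e, rfl⟩ := ihz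
    exact ⟨a * c + d * b * e, a * e + b * c, by push_cast; linear_combination (b * e : K) * hα⟩

theorem minpoly_eq_X_sq_sub_C (hα : α ^ 2 = d) (hd : ∀ q : ℚ, q ^ 2 ≠ d) :
    minpoly ℚ α = X ^ 2 - C d := by
  refine (minpoly.eq_of_irreducible_of_monic (X_pow_sub_C_irreducible_of_prime Nat.prime_two hd)
    ?_ (monic_X_pow_sub_C _ two_ne_zero)).symm
  simp [hα]

theorem isIntegral_of_sq_eq (hα : α ^ 2 = d) : IsIntegral ℚ α :=
  ⟨X ^ 2 - C d, monic_X_pow_sub_C _ two_ne_zero, by simp [hα]⟩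

theorem exists_algHom_apply_eq_neg (hα : α ^ 2 = d) (hd : ∀ q : ℚ, q ^ 2 ≠ d)
    (hgen : Algebra.adjoin ℚ {α} = ⊤) : ∃ σ : K →ₐ[ℚ] K, σ α = -α := by
  let pb := PowerBasis.ofAdjoinEqTop' (isIntegral_of_sq_eq hα) hgen
  have hpb : pb.gen = α := PowerBasis.ofAdjoinEqTop'_gen _ _
  have hroot : aeval (-α) (minpoly ℚ pb.gen) = 0 := by
    simp [hpb, minpoly_eq_X_sq_sub_C hα hd, hα]
  exact ⟨pb.lift (-α) hroot, (congrArg (pb.lift (-α) hroot) hpb).symm.trans (pb.lift_gen _ hroot)⟩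

theorem finrank_eq_two_of_sq_eq (hα : α ^ 2 = d) (hd : ∀ q : ℚ, q ^ 2 ≠ d)
    (hgen : Algebra.adjoin ℚ {α} = ⊤) : Module.finrank ℚ K = 2 := by
  rw [(PowerBasis.ofAdjoinEqTop' (isIntegral_of_sq_eq hα) hgen).finrank,
    PowerBasis.ofAdjoinEqTop'_dim, minpoly_eq_X_sq_sub_C hα hd, natDegree_X_pow_sub_C]

theorem AlgHom.apply_apply_eq_self_of_apply_eq_neg (hgen : Algebra.adjoin ℚ {α} = ⊤)
    {σ : K →ₐ[ℚ] K} (hσ : σ α = -α) (x : K) : σ (σ x) = x := by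
  have : σ.comp σ = AlgHom.id ℚ K :=
    AlgHom.ext_of_adjoin_eq_top hgen fun y hy => by simp [Set.mem_singleton_iff.mp hy, hσ]
  exact AlgHom.congr_fun this x

theorem exists_ratCast_eq_of_apply_eq_self (hα : α ^ 2 = d) (hα0 : α ≠ 0)
    (hgen : Algebra.adjoin ℚ {α} = ⊤) {σ : K →ₐ[ℚ] K} (hσ : σ α = -α) {x : K} (hx : σ x = x) :
    ∃ a : ℚ, x = a := by
  obtain ⟨a, b, rfl⟩ := exists_ratCast_add_mul_eq hα hgen x
  have hb : (b : K) = 0 := by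
    have : 2 * (b : K) * α = 0 := by
      rw [map_add, map_mul, hσ, map_ratCast, map_ratCast] at hx
      linear_combination -hx
    simpa [hα0] using this
  exact ⟨a, by simp [hb]⟩

end QuadraticField

theorem Int.eq_zero_of_mul_sq_add_sq_eq {p : ℕ} (hp : p.Prime) (hp4 : 4 < p) {m n : ℤ}
    (h : p * m ^ 2 + n ^ 2 = 4 * p) : n = 0 := by
  obtain ⟨t, rfl⟩ : (p : ℤ) ∣ n :=
    (Nat.prime_iff_prime_int.mp hp).dvd_of_dvd_pow (n := 2) ⟨4 - m ^ 2, by linear_combination h⟩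
  have hp0 : (0 : ℤ) < p := by exact_mod_cast hp.pos
  have ht : m ^ 2 + p * t ^ 2 = 4 := by
    apply mul_left_cancel₀ hp0.ne'
    linear_combination h
  have : t ^ 2 < 1 := by
    by_contra! h1
    have : (4 : ℤ) < p := by exact_mod_cast hp4
    nlinarith
  simp [show t = 0 by nlinarith]

section FixedIntegers

variable {R : Type*} [CommRing R] [IsDomain R] [CharZero R] {σ : R →+* R}

theorem Int.eq_one_or_eq_neg_one_of_isUnit_cast_of_fixed (hfix : ∀ x, σ x = x → ∃ n : ℤ, x = n)
    {k : ℤ} (hk : IsUnit (k : R)) : k = 1 ∨ k = -1 := by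
  obtain ⟨w, hw⟩ := hk.exists_right_inv
  have hσw : σ w = w := by
    apply mul_left_cancel₀ hk.ne_zero
    rw [hw, ← map_intCast σ k, ← map_mul, hw, map_one]
  obtain ⟨j, rfl⟩ := hfix w hσw
  exact Int.eq_one_or_neg_one_of_mul_eq_one (v := j) (by exact_mod_cast hw)

theorem eq_one_or_eq_neg_one_of_isUnit_of_fixed (hσσ : ∀ x, σ (σ x) = x)
    (hfix : ∀ x, σ x = x → ∃ n : ℤ, x = n) {p : ℕ} (hp : p.Prime) (hp4 : 4 < p) {ω : R}
    (hω : ω ^ 2 = -p) (hσω : σ ω = -ω) {u : R} (hu : IsUnit u) : u = 1 ∨ u = -1 := by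
  obtain ⟨m, hm⟩ := hfix (u + σ u) (by rw [map_add, hσσ, add_comm])
  obtain ⟨n, hn⟩ := hfix (ω * (u - σ u)) (by rw [map_mul, map_sub, hσσ, hσω]; ring)
  obtain ⟨k, hk⟩ := hfix (u * σ u) (by rw [map_mul, hσσ, mul_comm])
  have hrel : p * m ^ 2 + n ^ 2 = 4 * p * k := by
    have : ((p * m ^ 2 + n ^ 2 : ℤ) : R) = ((4 * p * k : ℤ) : R) := by
      push_cast [← hm, ← hn, ← hk]
      linear_combination (u - σ u) ^ 2 * hω
    exact_mod_cast this
  have hk1 : k = 1 := by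
    rcases Int.eq_one_or_eq_neg_one_of_isUnit_cast_of_fixed hfix (hk ▸ hu.mul (hu.map σ))
      with rfl | rfl
    · rfl
    · have : (0 : ℤ) < p := by exact_mod_cast hp.pos
      nlinarith
  have hn0 : n = 0 := Int.eq_zero_of_mul_sq_add_sq_eq hp hp4 (by rw [hrel, hk1, mul_one])
  have hω0 : ω ≠ 0 := by
    rintro rfl
    exact hp.ne_zero (by exact_mod_cast (neg_eq_zero.mp (by simpa using hω.symm) : (p : R) = 0))
  have hσu : σ u = u := by
    rw [hn0, Int.cast_zero, mul_eq_zero, sub_eq_zero] at hn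
    exact (hn.resolve_left hω0).symm
  obtain ⟨j, rfl⟩ := hfix u hσu
  rcases Int.eq_one_or_eq_neg_one_of_isUnit_cast_of_fixed hfix hu with rfl | rfl <;> simp

end FixedIntegers

section Dedekind

variable {S : Type*} [CommRing S] [IsDedekindDomain S] [Module.Free ℤ S] [Module.Finite ℤ S]

theorem Ideal.isMaximal_of_absNorm_prime {I : Ideal S} (hI : (Ideal.absNorm I).Prime) :
    I.IsMaximal := by
  refine (Ideal.isPrime_of_irreducible_absNorm hI.prime.irreducible).isMaximal ?_
  rintro rfl
  exact Nat.not_prime_zero (by simpa using hI)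

theorem Ideal.absNorm_span_of_sq_eq_neg_natCast (hS : Module.finrank ℤ S = 2) {p : ℕ} {ω : S}
    (hω : ω ^ 2 = -(p : S)) : Ideal.absNorm (Ideal.span {ω}) = p := by
  have : Ideal.absNorm (Ideal.span {ω}) ^ 2 = p ^ 2 := by
    rw [← map_pow, Ideal.span_singleton_pow, hω, Ideal.span_singleton_neg,
      Ideal.absNorm_span_natCast, hS]
  exact Nat.pow_left_injective two_ne_zero this

end Dedekind

section RingOfIntegers

variable {K : Type*} [Field K] [NumberField K]

theorem NumberField.RingOfIntegers.exists_intCast_eq_of_coe_eq_ratCast {x : 𝓞 K} {q : ℚ}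
    (hx : (x : K) = q) : ∃ n : ℤ, x = n := by
  have hq : IsIntegral ℤ q := by
    rw [← isIntegral_algebraMap_iff (algebraMap ℚ K).injective, eq_ratCast, ← hx]
    exact x.isIntegral_coe
  obtain ⟨n, rfl⟩ := IsIntegrallyClosed.isIntegral_iff.mp hq
  exact ⟨n, RingOfIntegers.ext (by simp [hx])⟩

theorem NumberField.RingOfIntegers.exists_conj {d : ℚ} (hd : ∀ q : ℚ, q ^ 2 ≠ d) {ω : 𝓞 K}
    (hω : (ω : K) ^ 2 = d) (hgen : Algebra.adjoin ℚ {(ω : K)} = ⊤) :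
    ∃ σ : 𝓞 K →+* 𝓞 K, (∀ x, σ (σ x) = x) ∧ (∀ x, σ x = x → ∃ n : ℤ, x = n) ∧ σ ω = -ω := by
  obtain ⟨σ, hσ⟩ := exists_algHom_apply_eq_neg hω hd hgen
  have hω0 : (ω : K) ≠ 0 := fun h => hd 0 (by rw [h] at hω; exact_mod_cast hω)
  refine ⟨RingOfIntegers.mapRingHom σ, fun x => RingOfIntegers.ext ?_, fun x hx => ?_,
    RingOfIntegers.ext (by simpa using hσ)⟩
  · exact AlgHom.apply_apply_eq_self_of_apply_eq_neg hgen hσ x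
  · obtain ⟨q, hq⟩ := exists_ratCast_eq_of_apply_eq_self hω hω0 hgen hσ
      (congrArg ((↑) : 𝓞 K → K) hx)
    exact RingOfIntegers.exists_intCast_eq_of_coe_eq_ratCast hq

end RingOfIntegers

theorem pow_classNumber_principal_unique_generator_general (p : ℕ) [Fact p.Prime]
    (hp4 : p % 4 = 3) (hp : 3 < p)
    (K : Type) [Field K] [NumberField K] (α : K)
    (hα : α ^ 2 = -(p : K)) (hgen : Algebra.adjoin ℚ ({α} : Set K) = ⊤)
    (αO : NumberField.RingOfIntegers K) (hαO : (αO : K) = α)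
    (I : Ideal (NumberField.RingOfIntegers K))
    (hcop : IsCoprime I (Ideal.span {(p : NumberField.RingOfIntegers K)})) :
    (I ^ NumberField.classNumber K).IsPrincipal ∧
    ∃! β : NumberField.RingOfIntegers K,
      Ideal.span {β} = I ^ NumberField.classNumber K ∧
      Ideal.Quotient.mk (Ideal.span {αO}) β ≠ 0 ∧
      ∃ γ : NumberField.RingOfIntegers K ⧸ Ideal.span {αO},
        Ideal.Quotient.mk (Ideal.span {αO}) β = γ ^ 2 := by
  subst hαO
  have hp' : p.Prime := Fact.out
  have hαO : αO ^ 2 = -(p : 𝓞 K) := RingOfIntegers.ext (by push_cast; exact hα)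
  have hd : ∀ q : ℚ, q ^ 2 ≠ -p := fun q h => by
    nlinarith [sq_nonneg q, (Nat.cast_pos.mpr hp'.pos : (0 : ℚ) < p)]
  obtain ⟨σ, hσσ, hfix, hσα⟩ := RingOfIntegers.exists_conj hd (by push_cast; exact hα) hgen
  have hrank : Module.finrank ℤ (𝓞 K) = 2 := by
    rw [RingOfIntegers.rank, finrank_eq_two_of_sq_eq (d := -p) (by push_cast; exact hα) hd hgen]
  have hnorm := Ideal.absNorm_span_of_sq_eq_neg_natCast hrank hαO
  have : (Ideal.span {αO}).IsMaximal := Ideal.isMaximal_of_absNorm_prime (hnorm ▸ hp')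
  have hcard : Nat.card (𝓞 K ⧸ Ideal.span {αO}) % 4 = 3 := by
    rwa [← Submodule.cardQuot_apply, ← Ideal.absNorm_apply, hnorm]
  have hcopα : IsCoprime (I ^ classNumber K) (Ideal.span {αO}) := by
    refine (hcop.of_isCoprime_of_dvd_right ⟨Ideal.span {αO}, ?_⟩).pow_left
    rw [← pow_two, Ideal.span_singleton_pow, hαO, Ideal.span_singleton_neg]
  have hprinc := Ideal.isPrincipal_pow_card_classGroup I
  exact ⟨hprinc, existsUnique_span_singleton_eq_and_mk_eq_sq
    (fun u hu => eq_one_or_eq_neg_one_of_isUnit_of_fixed hσσ hfix hp' (by omega) hαO hσα hu)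
    hcard hprinc hcopα⟩

/-- Let `p > 3` be a prime with `p ≡ 3 (mod 4)`, `k = ℚ(√-p)` (formalized as a number field `K`
generated over `ℚ` by a square root `α` of `-p`, with `α` an algebraic integer `αO` of `K`),
`𝒪` the ring of integers of `k`, and `h` the class number of `k`. Then for every nonzero ideal
`𝔞` of `𝒪` coprime to `p`, the ideal `𝔞^h` is principal, and among its generators there is
exactly one `β` whose image in the residue field `𝒪/(√-p) ≅ 𝔽_p` is a nonzero square. -/
theorem pow_classNumber_principal_unique_generator (p : ℕ) [Fact p.Prime]
    (hp4 : p % 4 = 3) (hp : 3 < p)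
    (K : Type) [Field K] [NumberField K] (α : K)
    (hα : α ^ 2 = -(p : K)) (hgen : Algebra.adjoin ℚ ({α} : Set K) = ⊤)
    (αO : NumberField.RingOfIntegers K) (hαO : (αO : K) = α)
    (I : Ideal (NumberField.RingOfIntegers K)) (hI : I ≠ ⊥)
    (hcop : IsCoprime I (Ideal.span {(p : NumberField.RingOfIntegers K)})) :
    (I ^ NumberField.classNumber K).IsPrincipal ∧
    ∃! β : NumberField.RingOfIntegers K,
      Ideal.span {β} = I ^ NumberField.classNumber K ∧
      Ideal.Quotient.mk (Ideal.span {αO}) β ≠ 0 ∧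
      ∃ γ : NumberField.RingOfIntegers K ⧸ Ideal.span {αO},
        Ideal.Quotient.mk (Ideal.span {αO}) β = γ ^ 2 :=
  pow_classNumber_principal_unique_generator_general p hp4 hp K α hα hgen αO hαO I hcop
end
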